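/- arXiv:1006.0525 — 2 statements merged into one kernel-verified Lean document; each statement's English description precedes it below -/
import Mathlib

section
/- Let G be a topological group acting continuously on topological spaces Z and Z', let H ⊆ G be a closed subgroup, and suppose U₀ = G/H as a G-space. Then the category of G-equivariant continuous maps Z → G/H is equivalent to the category of H-spaces, via Z ↦ φ⁻¹(eH) where φ : Z → G/H is the structure map, provided G → G/H admits local sections. -/
/-!
A `G`-space `Z` over `G/H` is determined by its fiber `F = φ⁻¹(eH)`: every `z` is `g • x` with
`x ∈ F` for any representative `g` of `φ z`, and `x` is unique up to the action of `H`.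
Hence an `H`-equivariant map `f` on fibers extends uniquely to `z ↦ g • f (g⁻¹ • z)`, the choice
of `g` being irrelevant by `H`-equivariance. Continuity of the extension is a local statement,
and over an open set on which `G → G/H` has a continuous section `s` one may take `g = s (φ z)`.
-/

namespace QuotientGroup

variable {G : Type*} [Group G]

def HasLocalSections [TopologicalSpace G] (H : Subgroup G) : Prop :=
  ∀ p : G ⧸ H, ∃ U : Set (G ⧸ H), IsOpen U ∧ p ∈ U ∧
    ∃ s : U → G, Continuous s ∧ ∀ y : U, QuotientGroup.mk (s y) = (y : G ⧸ H)

variable {H : Subgroup G} {Z Z' : Type*} {φ : Z → G ⧸ H} {φ' : Z' → G ⧸ H}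

abbrev fiberOne (φ : Z → G ⧸ H) : Set Z := φ ⁻¹' {((1 : G) : G ⧸ H)}

def restrictToFiber {F : Z → Z'} (hF : ∀ z, φ' (F z) = φ z) (z : fiberOne φ) : fiberOne φ' :=
  ⟨F z, (hF z).trans z.2⟩

theorem continuous_restrictToFiber [TopologicalSpace Z] [TopologicalSpace Z'] {F : Z → Z'}
    (hFc : Continuous F) (hF : ∀ z, φ' (F z) = φ z) :
    Continuous (restrictToFiber hF) :=
  (hFc.comp continuous_subtype_val).subtype_mk _

variable [MulAction G Z] [MulAction G Z']

def IsFiberEquivariant (f : fiberOne φ → fiberOne φ') : Prop :=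
  ∀ (h : H) (z w : fiberOne φ), (w : Z) = (h : G) • (z : Z) → (f w : Z') = (h : G) • (f z : Z')

theorem inv_smul_mem_fiberOne (hφe : ∀ (g : G) (z : Z), φ (g • z) = g • φ z) {g : G} {z : Z}
    (hg : (g : G ⧸ H) = φ z) : g⁻¹ • z ∈ fiberOne φ := by
  simp [hφe, ← hg]

theorem smul_apply_inv_smul_eq (hφe : ∀ (g : G) (z : Z), φ (g • z) = g • φ z)
    {f : fiberOne φ → fiberOne φ'} (hf : IsFiberEquivariant f) {z : Z} {g g' : G}
    (hg : (g : G ⧸ H) = φ z) (hg' : (g' : G ⧸ H) = φ z) :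
    g • (f ⟨g⁻¹ • z, inv_smul_mem_fiberOne hφe hg⟩ : Z') =
      g' • (f ⟨g'⁻¹ • z, inv_smul_mem_fiberOne hφe hg'⟩ : Z') := by
  have hmem : g⁻¹ * g' ∈ H := QuotientGroup.eq.mp (hg.trans hg'.symm)
  have hf' := hf ⟨g⁻¹ * g', hmem⟩ ⟨g'⁻¹ • z, inv_smul_mem_fiberOne hφe hg'⟩
    ⟨g⁻¹ • z, inv_smul_mem_fiberOne hφe hg⟩ (by simp [smul_smul])
  rw [hf', smul_smul, mul_inv_cancel_left]

noncomputable def extendFromFiber (hφe : ∀ (g : G) (z : Z), φ (g • z) = g • φ z)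
    (f : fiberOne φ → fiberOne φ') (z : Z) : Z' :=
  (φ z).out • (f ⟨(φ z).out⁻¹ • z, inv_smul_mem_fiberOne hφe (out_eq' _)⟩ : Z')

section Extension

variable (hφe : ∀ (g : G) (z : Z), φ (g • z) = g • φ z) {f : fiberOne φ → fiberOne φ'}

theorem extendFromFiber_eq_smul (hf : IsFiberEquivariant f) {z : Z} {g : G}
    (hg : (g : G ⧸ H) = φ z) :
    extendFromFiber hφe f z = g • (f ⟨g⁻¹ • z, inv_smul_mem_fiberOne hφe hg⟩ : Z') :=
  smul_apply_inv_smul_eq hφe hf (out_eq' _) hg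

theorem extendFromFiber_smul (hf : IsFiberEquivariant f) (g : G) (z : Z) :
    extendFromFiber hφe f (g • z) = g • extendFromFiber hφe f z := by
  have hg : ((g * (φ z).out : G) : G ⧸ H) = φ (g • z) := by
    rw [hφe, ← smul_eq_mul, MulAction.Quotient.mk_smul_out]
  rw [extendFromFiber_eq_smul hφe hf hg, extendFromFiber, mul_smul]
  congr 3
  simp [mul_inv_rev, mul_smul]

theorem apply_extendFromFiber (hφ'e : ∀ (g : G) (z : Z'), φ' (g • z) = g • φ' z) (z : Z) :
    φ' (extendFromFiber hφe f z) = φ z := by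
  rw [extendFromFiber, hφ'e, (f _).2, MulAction.Quotient.smul_coe, smul_eq_mul, mul_one, out_eq']

theorem extendFromFiber_of_mem (hf : IsFiberEquivariant f) (z : fiberOne φ) :
    extendFromFiber hφe f z = f z := by
  rw [extendFromFiber_eq_smul hφe hf (g := 1) z.2.symm]
  simp

end Extension

theorem isFiberEquivariant_restrictToFiber {F : Z → Z'} (hF : ∀ z, φ' (F z) = φ z)
    (hFe : ∀ (g : G) (z : Z), F (g • z) = g • F z) : IsFiberEquivariant (restrictToFiber hF) := by
  intro h z w hw
  simp [restrictToFiber, hw, hFe]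

theorem extendFromFiber_restrictToFiber (hφe : ∀ (g : G) (z : Z), φ (g • z) = g • φ z)
    {F : Z → Z'} (hF : ∀ z, φ' (F z) = φ z) (hFe : ∀ (g : G) (z : Z), F (g • z) = g • F z) :
    extendFromFiber hφe (restrictToFiber hF) = F := by
  funext z
  simp [extendFromFiber, restrictToFiber, hFe]

section Topology

variable [TopologicalSpace G] [TopologicalSpace Z] [TopologicalSpace Z']

theorem continuous_extendFromFiber [ContinuousInv G] [ContinuousSMul G Z] [ContinuousSMul G Z']
    (hsec : HasLocalSections H) (hφc : Continuous φ)
    (hφe : ∀ (g : G) (z : Z), φ (g • z) = g • φ z) {f : fiberOne φ → fiberOne φ'}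
    (hfc : Continuous f) (hf : IsFiberEquivariant f) : Continuous (extendFromFiber hφe f) := by
  refine continuous_iff_continuousAt.mpr fun z₀ => ?_
  obtain ⟨U, hU, hz₀U, s, hs, hs_mk⟩ := hsec (φ z₀)
  refine ContinuousOn.continuousAt ?_ ((hU.preimage hφc).mem_nhds hz₀U)
  rw [continuousOn_iff_continuous_domRestrict]
  have hsφ : Continuous fun z : φ ⁻¹' U => s ⟨φ z, z.2⟩ :=
    hs.comp ((hφc.comp continuous_subtype_val).subtype_mk _)
  have hlocal : Continuous fun z : φ ⁻¹' U =>
      s ⟨φ z, z.2⟩ • (f ⟨(s ⟨φ z, z.2⟩)⁻¹ • (z : Z), inv_smul_mem_fiberOne hφe (hs_mk _)⟩ : Z') :=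
    hsφ.smul (continuous_subtype_val.comp
      (hfc.comp ((hsφ.inv.smul continuous_subtype_val).subtype_mk _)))
  exact hlocal.congr fun z => (extendFromFiber_eq_smul hφe hf (hs_mk _)).symm

end Topology

end QuotientGroup

open QuotientGroup

theorem stmt15_general {G : Type*} [TopologicalSpace G] [Group G] [IsTopologicalGroup G]
    (H : Subgroup G)
    (hsec : ∀ p : G ⧸ H, ∃ U : Set (G ⧸ H), IsOpen U ∧ p ∈ U ∧
      ∃ s : U → G, Continuous s ∧ ∀ y : U, QuotientGroup.mk (s y) = (y : G ⧸ H))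
    {Z Z' : Type*} [TopologicalSpace Z] [TopologicalSpace Z']
    [MulAction G Z] [ContinuousSMul G Z] [MulAction G Z'] [ContinuousSMul G Z']
    (φ : Z → G ⧸ H) (hφc : Continuous φ) (hφe : ∀ (g : G) (z : Z), φ (g • z) = g • φ z)
    (φ' : Z' → G ⧸ H) (hφ'e : ∀ (g : G) (z : Z'), φ' (g • z) = g • φ' z) :
    ∃ e : {f : Z → Z' // Continuous f ∧ (∀ (g : G) (z : Z), f (g • z) = g • f z) ∧
          ∀ z : Z, φ' (f z) = φ z} ≃
        {f : (φ ⁻¹' {((1 : G) : G ⧸ H)}) → (φ' ⁻¹' {((1 : G) : G ⧸ H)}) // Continuous f ∧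
          ∀ (h : H) (z w : (φ ⁻¹' {((1 : G) : G ⧸ H)})), (w : Z) = (h : G) • (z : Z) →
            ((f w : Z') = (h : G) • (f z : Z'))},
      ∀ (f : {f : Z → Z' // Continuous f ∧ (∀ (g : G) (z : Z), f (g • z) = g • f z) ∧
          ∀ z : Z, φ' (f z) = φ z}) (z : (φ ⁻¹' {((1 : G) : G ⧸ H)})),
        ((e f).1 z : Z') = f.1 (z : Z) :=
  ⟨{ toFun := fun F => ⟨restrictToFiber F.2.2.2, continuous_restrictToFiber F.2.1 F.2.2.2,
        isFiberEquivariant_restrictToFiber F.2.2.2 F.2.2.1⟩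
     invFun := fun f => ⟨extendFromFiber hφe f.1,
        continuous_extendFromFiber hsec hφc hφe f.2.1 f.2.2,
        extendFromFiber_smul hφe f.2.2, apply_extendFromFiber hφe hφ'e⟩
     left_inv := fun F => Subtype.ext (extendFromFiber_restrictToFiber hφe F.2.2.2 F.2.2.1)
     right_inv := fun f =>
        Subtype.ext (funext fun z => Subtype.ext (extendFromFiber_of_mem hφe f.2.2 z)) },
    fun _ _ => rfl⟩

/-- Let `G` be a topological group and `H ⊆ G` a closed subgroup such that
`G → G/H` admits local sections.  For `G`-spaces `Z, Z'` equipped with continuous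
equivariant maps `φ : Z → G/H`, `φ' : Z' → G/H`, the `G`-equivariant continuous maps
`Z → Z'` over `G/H` correspond bijectively to the `H`-equivariant continuous maps
between the fibers over the identity coset.  (This is the equivalence between
`G`-spaces over `G/H` and `H`-spaces, `Z ↦ φ⁻¹(eH)`.) -/
theorem stmt15 {G : Type*} [TopologicalSpace G] [Group G] [IsTopologicalGroup G]
    (H : Subgroup G) (hH : IsClosed (H : Set G))
    (hsec : ∀ p : G ⧸ H, ∃ U : Set (G ⧸ H), IsOpen U ∧ p ∈ U ∧
      ∃ s : U → G, Continuous s ∧ ∀ y : U, QuotientGroup.mk (s y) = (y : G ⧸ H))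
    {Z Z' : Type*} [TopologicalSpace Z] [TopologicalSpace Z']
    [MulAction G Z] [ContinuousSMul G Z] [MulAction G Z'] [ContinuousSMul G Z']
    (φ : Z → G ⧸ H) (hφc : Continuous φ) (hφe : ∀ (g : G) (z : Z), φ (g • z) = g • φ z)
    (φ' : Z' → G ⧸ H) (hφ'c : Continuous φ') (hφ'e : ∀ (g : G) (z : Z'), φ' (g • z) = g • φ' z) :
    ∃ e : {f : Z → Z' // Continuous f ∧ (∀ (g : G) (z : Z), f (g • z) = g • f z) ∧
          ∀ z : Z, φ' (f z) = φ z} ≃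
        {f : (φ ⁻¹' {((1 : G) : G ⧸ H)}) → (φ' ⁻¹' {((1 : G) : G ⧸ H)}) // Continuous f ∧
          ∀ (h : H) (z w : (φ ⁻¹' {((1 : G) : G ⧸ H)})), (w : Z) = (h : G) • (z : Z) →
            ((f w : Z') = (h : G) • (f z : Z'))},
      ∀ (f : {f : Z → Z' // Continuous f ∧ (∀ (g : G) (z : Z), f (g • z) = g • f z) ∧
          ∀ z : Z, φ' (f z) = φ z}) (z : (φ ⁻¹' {((1 : G) : G ⧸ H)})),
        ((e f).1 z : Z') = f.1 (z : Z) :=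
  stmt15_general H hsec φ hφc hφe φ' hφ'e
end

section
/- Let 0 → ℤ → ℝ → 𝕊¹ → 0 be the standard exact sequence of topological abelian groups and let C be a locally compact abelian topological group with maximal compact subgroup C¹ = ker(|·| : C → ℝ₊^×), such that C ≅ C¹ × ℝ topologically. Then the connecting map in continuous-homomorphism groups yields an isomorphism Hom_cont(C, 𝕊¹)/image(Hom_cont(C, ℝ)) ≅ (C¹)^D, the Pontryagin dual of C¹. -/
/-- The projection `ℝ → 𝕊¹ = ℝ/ℤ` as a continuous additive homomorphism. -/
noncomputable def realToCircle : ContinuousAddMonoidHom ℝ (AddCircle (1 : ℝ)) :=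
  ⟨QuotientAddGroup.mk' (AddSubgroup.zmultiples (1 : ℝ)), continuous_quotient_mk'⟩

/-- Post-composition with `ℝ → 𝕊¹`, as a homomorphism
`Hom_cont(C, ℝ) →+ Hom_cont(C, 𝕊¹)`. -/
noncomputable def pushToCircle (C : Type*) [TopologicalSpace C] [AddCommGroup C]
    [IsTopologicalAddGroup C] :
    ContinuousAddMonoidHom C ℝ →+ ContinuousAddMonoidHom C (AddCircle (1 : ℝ)) where
  toFun g := realToCircle.comp g
  map_zero' := by ext x; exact map_zero realToCircle
  map_add' a b := by ext x; exact map_add realToCircle (a x) (b x)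

/-- The inclusion of an additive subgroup, as a continuous additive homomorphism. -/
def subInclusion {C : Type*} [TopologicalSpace C] [AddCommGroup C]
    [IsTopologicalAddGroup C] (C1 : AddSubgroup C) : ContinuousAddMonoidHom C1 C :=
  ⟨C1.subtype, continuous_subtype_val⟩

/-!
Restriction to `C¹` is onto because the splitting `C ≅ C¹ × ℝ` gives a continuous retraction
`x ↦ x - s (q x)` of `C` onto `C¹`, where `q : C → ℝ` is the projection and `s` its section.
A character `f` trivial on `C¹` therefore factors as `f ∘ s ∘ q`, and the character `f ∘ s` of `ℝ`
lifts through the covering `ℝ → 𝕊¹` to a continuous homomorphism `ℝ → ℝ`; conversely a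
homomorphism from the compact group `C¹` to `ℝ` has bounded image, hence vanishes. Maximality
of `C¹` among compact subgroups identifies it with the kernel of `q`.
-/

theorem ContinuousAddMonoidHom.exists_comp_realToCircle_eq (h : ℝ →ₜ+ AddCircle (1 : ℝ)) :
    ∃ g : ℝ →ₜ+ ℝ, realToCircle.comp g = h := by
  obtain ⟨F, ⟨-, hF⟩, huniq⟩ :=
    (AddCircle.isCoveringMap_coe (1 : ℝ)).existsUnique_continuousMap_lifts
      (h : C(ℝ, AddCircle (1 : ℝ))) 0 0 (by simp)
  have hFh (t : ℝ) : (F t : AddCircle (1 : ℝ)) = h t := congr_fun hF t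
  -- `t ↦ F (s + t) - F s` is another lift of `h` vanishing at `0`, so it is `F`.
  have hadd (s t : ℝ) : F (s + t) = F s + F t := by
    have := huniq ⟨fun t ↦ F (s + t) - F s, by fun_prop⟩
      ⟨by simp, funext fun t ↦ by simp [hFh, map_add]⟩
    rw [← DFunLike.congr_fun this t]
    simp
  exact ⟨⟨AddMonoidHom.mk' F hadd, F.continuous⟩, ContinuousAddMonoidHom.ext hFh⟩

theorem ContinuousAddMonoidHom.eq_zero_of_compactSpace {K : Type*} [TopologicalSpace K]
    [AddCommGroup K] [CompactSpace K] (g : K →ₜ+ ℝ) : g = 0 := by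
  ext x
  by_contra hx
  obtain ⟨M, hM⟩ := (isCompact_range g.continuous).isBounded.subset_closedBall 0
  obtain ⟨n, hn⟩ := exists_nat_gt (M / |g x|)
  have hnx : (n : ℝ) * |g x| ≤ M := by
    simpa [abs_mul] using hM ⟨n • x, rfl⟩
  rw [div_lt_iff₀ (abs_pos.mpr hx)] at hn
  linarith

section SplitByReal

variable {C : Type*} [TopologicalSpace C] [AddCommGroup C] [IsTopologicalAddGroup C]

@[simp]
theorem subInclusion_apply {K : AddSubgroup C} (k : K) : subInclusion K k = k := rfl

noncomputable def restrictToCircle (K : AddSubgroup C) :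
    (C →ₜ+ AddCircle (1 : ℝ)) →+ (K →ₜ+ AddCircle (1 : ℝ)) :=
  (ContinuousAddMonoidHom.compLeft (AddCircle (1 : ℝ)) (subInclusion K)).toAddMonoidHom

@[simp]
theorem restrictToCircle_apply (K : AddSubgroup C) (f : C →ₜ+ AddCircle (1 : ℝ)) (k : K) :
    restrictToCircle K f k = f k := rfl

variable {q : C →ₜ+ ℝ} {s : ℝ →ₜ+ C} {K : AddSubgroup C}

theorem restrictToCircle_surjective (hqs : ∀ t, q (s t) = t) (hK : ∀ x, x ∈ K ↔ q x = 0) :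
    Function.Surjective (restrictToCircle K) := by
  let r : C →ₜ+ K :=
    { toFun x := ⟨x - s (q x), by simp [hK, hqs]⟩
      map_zero' := by ext; simp
      map_add' x y := by ext; simp only [map_add, AddSubgroup.coe_add]; abel
      continuous_toFun := by fun_prop }
  intro χ
  refine ⟨χ.comp r, ContinuousAddMonoidHom.ext fun k ↦ congr_arg χ (Subtype.ext ?_)⟩
  simp [r, (hK k).1 k.2]

theorem range_pushToCircle_eq_ker_restrictToCircle [CompactSpace K] (hqs : ∀ t, q (s t) = t)
    (hK : ∀ x, x ∈ K ↔ q x = 0) : (pushToCircle C).range = (restrictToCircle K).ker := by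
  ext f
  constructor
  · rintro ⟨g, rfl⟩
    have hg : g.comp (subInclusion K) = 0 := (g.comp (subInclusion K)).eq_zero_of_compactSpace
    ext k
    simpa [pushToCircle] using congr_arg realToCircle (DFunLike.congr_fun hg k)
  · intro hf
    obtain ⟨G, hG⟩ := (f.comp s).exists_comp_realToCircle_eq
    refine ⟨G.comp q, ContinuousAddMonoidHom.ext fun x ↦ ?_⟩
    have hfK : f (x - s (q x)) = 0 :=
      DFunLike.congr_fun hf (⟨x - s (q x), by simp [hK, hqs]⟩ : K)
    calc realToCircle (G (q x)) = f (s (q x)) := DFunLike.congr_fun hG (q x)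
      _ = f (s (q x) + (x - s (q x))) := by rw [map_add, hfK, add_zero]
      _ = f x := by rw [add_sub_cancel]

noncomputable def quotientRangePushToCircleEquiv [CompactSpace K] (hqs : ∀ t, q (s t) = t)
    (hK : ∀ x, x ∈ K ↔ q x = 0) :
    (C →ₜ+ AddCircle (1 : ℝ)) ⧸ (pushToCircle C).range ≃+ (K →ₜ+ AddCircle (1 : ℝ)) :=
  (QuotientAddGroup.quotientAddEquivOfEq (range_pushToCircle_eq_ker_restrictToCircle hqs hK)).trans
    (QuotientAddGroup.quotientKerEquivOfSurjective _ (restrictToCircle_surjective hqs hK))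

theorem quotientRangePushToCircleEquiv_mk [CompactSpace K] (hqs : ∀ t, q (s t) = t)
    (hK : ∀ x, x ∈ K ↔ q x = 0) (f : C →ₜ+ AddCircle (1 : ℝ)) :
    quotientRangePushToCircleEquiv hqs hK f = f.comp (subInclusion K) := rfl

end SplitByReal

theorem AddSubgroup.mem_iff_snd_eq_zero_of_forall_isCompact_le {C K' : Type*}
    [TopologicalSpace C] [AddCommGroup C] [IsTopologicalAddGroup C] [TopologicalSpace K']
    [AddCommGroup K'] [CompactSpace K'] {K : AddSubgroup C} [CompactSpace K]
    (hmax : ∀ L : AddSubgroup C, IsCompact (L : Set C) → L ≤ K)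
    (E : C ≃ₜ+ K' × ℝ) (x : C) : x ∈ K ↔ (E x).2 = 0 := by
  let q : C →ₜ+ ℝ := (ContinuousAddMonoidHom.snd K' ℝ).comp E
  constructor
  · intro hx
    exact DFunLike.congr_fun (q.comp (subInclusion K)).eq_zero_of_compactSpace ⟨x, hx⟩
  · refine fun hx ↦ hmax q.toAddMonoidHom.ker ?_ hx
    have : (q.toAddMonoidHom.ker : Set C) = E ⁻¹' (Set.univ ×ˢ {0}) := by
      ext; simp [q]
    rw [this]
    exact E.toHomeomorph.isCompact_preimage.2 (isCompact_univ.prod isCompact_singleton)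

theorem stmt19_general {C : Type*} [TopologicalSpace C] [AddCommGroup C] [IsTopologicalAddGroup C]
    (C1 : AddSubgroup C) (hcomp : IsCompact (C1 : Set C))
    (hmax : ∀ K : AddSubgroup C, IsCompact (K : Set C) → K ≤ C1)
    (e : C ≃ₜ (C1 × ℝ)) (he : ∀ x y : C, e (x + y) = e x + e y) :
    ∃ Ψ : (ContinuousAddMonoidHom C (AddCircle (1 : ℝ)) ⧸ (pushToCircle C).range) ≃+
        ContinuousAddMonoidHom C1 (AddCircle (1 : ℝ)),
      ∀ f : ContinuousAddMonoidHom C (AddCircle (1 : ℝ)),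
        Ψ (QuotientAddGroup.mk f) = f.comp (subInclusion C1) := by
  have : CompactSpace C1 := isCompact_iff_compactSpace.mp hcomp
  let E : C ≃ₜ+ C1 × ℝ := { e.toEquiv with map_add' := he }
  let q : C →ₜ+ ℝ := (ContinuousAddMonoidHom.snd C1 ℝ).comp E
  let s : ℝ →ₜ+ C := (E.symm : C1 × ℝ →ₜ+ C).comp (ContinuousAddMonoidHom.inr C1 ℝ)
  have hqs (t : ℝ) : q (s t) = t := by simp [q, s]
  exact ⟨quotientRangePushToCircleEquiv hqs (C1.mem_iff_snd_eq_zero_of_forall_isCompact_le hmax E),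
    quotientRangePushToCircleEquiv_mk _ _⟩

/-- Let `C` be a locally compact Hausdorff abelian topological group with maximal
compact subgroup `C¹ = ker(|·| : C → ℝ)` such that `C ≅ C¹ × ℝ` topologically (and
additively).  Then restriction to `C¹` induces an isomorphism
`Hom_cont(C, 𝕊¹)/image(Hom_cont(C, ℝ)) ≅ (C¹)^D = Hom_cont(C¹, 𝕊¹)`,
the Pontryagin dual of `C¹`. -/
theorem stmt19 {C : Type*} [TopologicalSpace C] [AddCommGroup C] [IsTopologicalAddGroup C]
    [LocallyCompactSpace C] [T2Space C]
    (v : C →+ ℝ) (hv : Continuous v)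
    (C1 : AddSubgroup C) (hC1 : C1 = v.ker) (hcomp : IsCompact (C1 : Set C))
    (hmax : ∀ K : AddSubgroup C, IsCompact (K : Set C) → K ≤ C1)
    (e : C ≃ₜ (C1 × ℝ)) (he : ∀ x y : C, e (x + y) = e x + e y) :
    ∃ Ψ : (ContinuousAddMonoidHom C (AddCircle (1 : ℝ)) ⧸ (pushToCircle C).range) ≃+
        ContinuousAddMonoidHom C1 (AddCircle (1 : ℝ)),
      ∀ f : ContinuousAddMonoidHom C (AddCircle (1 : ℝ)),
        Ψ (QuotientAddGroup.mk f) = f.comp (subInclusion C1) :=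
  stmt19_general C1 hcomp hmax e he
end
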